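/- arXiv:1812.03838 — 2 statements merged into one kernel-verified Lean document; each statement's English description precedes it below -/
import Mathlib

section
/- Let X, Y be random variables on finite spaces and U_1, ..., U_r random variables such that for each odd i the Markov chain U_i - (U_1,...,U_{i-1}, X) - Y holds, and for each even i the Markov chain U_i - (U_1,...,U_{i-1}, Y) - X holds. Then for every i in {1,...,r}, I(X; Y | U_1, ..., U_i) <= I(X; Y). -/
open Finset

open Classical in
noncomputable def prob {Ω α : Type*} [Fintype Ω] (p : Ω → ℝ) (X : Ω → α) (x : α) : ℝ :=
  ∑ ω, if X ω = x then p ω else 0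

noncomputable def H2 {Ω α : Type*} [Fintype Ω] [Fintype α] (p : Ω → ℝ) (X : Ω → α) : ℝ :=
  -∑ x, prob p X x * Real.logb 2 (prob p X x)

noncomputable def condH {Ω α β : Type*} [Fintype Ω] [Fintype α] [Fintype β]
    (p : Ω → ℝ) (X : Ω → α) (Y : Ω → β) : ℝ :=
  -∑ x, ∑ y, prob p (fun ω => (X ω, Y ω)) (x, y) *
      Real.logb 2 (prob p (fun ω => (X ω, Y ω)) (x, y) / prob p Y y)

noncomputable def MI {Ω α β : Type*} [Fintype Ω] [Fintype α] [Fintype β]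
    (p : Ω → ℝ) (X : Ω → α) (Y : Ω → β) : ℝ :=
  ∑ x, ∑ y, prob p (fun ω => (X ω, Y ω)) (x, y) *
      Real.logb 2 (prob p (fun ω => (X ω, Y ω)) (x, y) / (prob p X x * prob p Y y))

noncomputable def condMI {Ω α β γ : Type*} [Fintype Ω] [Fintype α] [Fintype β] [Fintype γ]
    (p : Ω → ℝ) (X : Ω → α) (Y : Ω → β) (Z : Ω → γ) : ℝ :=
  ∑ x, ∑ y, ∑ z, prob p (fun ω => (X ω, Y ω, Z ω)) (x, y, z) *
      Real.logb 2 (prob p (fun ω => (X ω, Y ω, Z ω)) (x, y, z) * prob p Z z /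
        (prob p (fun ω => (X ω, Z ω)) (x, z) * prob p (fun ω => (Y ω, Z ω)) (y, z)))

def IsPMF {Ω : Type*} [Fintype Ω] (p : Ω → ℝ) : Prop :=
  (∀ ω, 0 ≤ p ω) ∧ ∑ ω, p ω = 1

def MarkovChain {Ω α β γ : Type*} [Fintype Ω] (p : Ω → ℝ)
    (A : Ω → α) (B : Ω → β) (C : Ω → γ) : Prop :=
  ∀ a b c, prob p (fun ω => (A ω, B ω, C ω)) (a, b, c) * prob p B b =
    prob p (fun ω => (A ω, B ω)) (a, b) * prob p (fun ω => (C ω, B ω)) (c, b)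

set_option linter.unusedSectionVars false
set_option maxRecDepth 4000

lemma logb_split {a b c d : ℝ} (ha : 0 < a) (hb : 0 < b) (hc : 0 < c) (hd : 0 < d) :
    Real.logb 2 (a * b / (c * d)) = Real.logb 2 a + Real.logb 2 b - Real.logb 2 c - Real.logb 2 d := by
  rw [Real.logb_div (by positivity) (by positivity), Real.logb_mul ha.ne' hb.ne',
    Real.logb_mul hc.ne' hd.ne']
  ring

section Basic
variable {Ω α β γ : Type*} [Fintype Ω] {p : Ω → ℝ}

lemma prob_nonneg (hp : ∀ ω, 0 ≤ p ω) (X : Ω → α) (x : α) : 0 ≤ prob p X x := by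
  classical
  refine Finset.sum_nonneg fun ω _ => ?_
  split_ifs <;> simp [hp ω]

lemma prob_le (hp : ∀ ω, 0 ≤ p ω) {S : Ω → α} {T : Ω → β} {s : α} {t : β}
    (h : ∀ ω, S ω = s → T ω = t) : prob p S s ≤ prob p T t := by
  classical
  refine Finset.sum_le_sum fun ω _ => ?_
  by_cases hs : S ω = s
  · simp [hs, h ω hs]
  · simp only [hs, if_false]
    split_ifs <;> simp [hp ω]

lemma sum_prob [Fintype α] (hp : ∑ ω, p ω = 1) (X : Ω → α) : ∑ x, prob p X x = 1 := by
  classical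
  unfold prob
  rw [Finset.sum_comm]
  simp [hp]

end Basic

section Basic
variable {Ω α β γ : Type*} [Fintype Ω] {p : Ω → ℝ}

lemma prob_congr {S : Ω → α} {T : Ω → β} {s : α} {t : β}
    (h : ∀ ω, S ω = s ↔ T ω = t) : prob p S s = prob p T t := by
  classical
  unfold prob
  refine Finset.sum_congr rfl fun ω _ => ?_
  exact if_congr (h ω) rfl rfl

lemma prob_sum_right [Fintype γ] (S : Ω → α) (T : Ω → γ) (s : α) :
    prob p S s = ∑ t, prob p (fun ω => (S ω, T ω)) (s, t) := by
  classical
  unfold prob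
  rw [Finset.sum_comm]
  refine Finset.sum_congr rfl fun ω _ => ?_
  simp [Prod.ext_iff, ite_and]

end Basic

set_option linter.unusedSectionVars false
section Four
variable {Ω A B C D : Type*} [Fintype Ω] [Fintype A] [Fintype B] [Fintype C] [Fintype D]
  {p : Ω → ℝ} (X : Ω → A) (Y : Ω → B) (V : Ω → C) (W : Ω → D)

local notation "q!" => fun x y v w => prob p (fun ω => (X ω, Y ω, V ω, W ω)) (x, y, v, w)

-- full-tuple reorderings
lemma M1a (x : A) (y : B) (v : C) (w : D) : prob p (fun ω => (X ω, Y ω, W ω, V ω)) (x, y, w, v) = q! x y v w :=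
  prob_congr (by intro ω; simp [Prod.ext_iff]; tauto)

lemma M1b (x : A) (y : B) (v : C) (w : D) : prob p (fun ω => (V ω, Y ω, W ω, X ω)) (v, y, w, x) = q! x y v w :=
  prob_congr (by intro ω; simp [Prod.ext_iff]; tauto)

-- marginals
lemma M2 (v : C) (w : D) : prob p (fun ω => (W ω, V ω)) (w, v) = ∑ x', ∑ y', q! x' y' v w := by
  rw [prob_sum_right _ (fun ω => (X ω, Y ω)), Fintype.sum_prod_type]
  exact Finset.sum_congr rfl fun x' _ => Finset.sum_congr rfl fun y' _ =>
    prob_congr (by intro ω; simp [Prod.ext_iff]; tauto)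

lemma M3 (x : A) (v : C) (w : D) : prob p (fun ω => (X ω, W ω, V ω)) (x, w, v) = ∑ y', q! x y' v w := by
  rw [prob_sum_right _ Y]
  exact Finset.sum_congr rfl fun y' _ => prob_congr (by intro ω; simp [Prod.ext_iff]; tauto)

lemma M4 (y : B) (v : C) (w : D) : prob p (fun ω => (Y ω, W ω, V ω)) (y, w, v) = ∑ x', q! x' y v w := by
  rw [prob_sum_right _ X]
  exact Finset.sum_congr rfl fun x' _ => prob_congr (by intro ω; simp [Prod.ext_iff]; tauto)

lemma M5 (x : A) (w : D) : prob p (fun ω => (W ω, X ω)) (w, x) = ∑ y', ∑ v', q! x y' v' w := by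
  rw [prob_sum_right _ (fun ω => (Y ω, V ω)), Fintype.sum_prod_type]
  exact Finset.sum_congr rfl fun y' _ => Finset.sum_congr rfl fun v' _ =>
    prob_congr (by intro ω; simp [Prod.ext_iff]; tauto)

lemma M6 (x : A) (v : C) (w : D) : prob p (fun ω => (V ω, W ω, X ω)) (v, w, x) = ∑ y', q! x y' v w := by
  rw [prob_sum_right _ Y]
  exact Finset.sum_congr rfl fun y' _ => prob_congr (by intro ω; simp [Prod.ext_iff]; tauto)

lemma M7 (x : A) (y : B) (w : D) : prob p (fun ω => (Y ω, W ω, X ω)) (y, w, x) = ∑ v', q! x y v' w := by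
  rw [prob_sum_right _ V]
  exact Finset.sum_congr rfl fun v' _ => prob_congr (by intro ω; simp [Prod.ext_iff]; tauto)

lemma M8 (y : B) (v : C) (w : D) : prob p (fun ω => (V ω, Y ω, W ω)) (v, y, w) = ∑ x', q! x' y v w := by
  rw [prob_sum_right _ X]
  exact Finset.sum_congr rfl fun x' _ => prob_congr (by intro ω; simp [Prod.ext_iff]; tauto)

lemma M9 (w : D) : prob p W w = ∑ x', ∑ y', ∑ v', q! x' y' v' w := by
  rw [prob_sum_right _ (fun ω => (X ω, Y ω, V ω)), Fintype.sum_prod_type]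
  refine Finset.sum_congr rfl fun x' _ => ?_
  rw [Fintype.sum_prod_type]
  exact Finset.sum_congr rfl fun y' _ => Finset.sum_congr rfl fun v' _ =>
    prob_congr (by intro ω; simp [Prod.ext_iff]; tauto)

lemma M10 (v : C) (w : D) : prob p (fun ω => (V ω, W ω)) (v, w) = ∑ x', ∑ y', q! x' y' v w := by
  rw [prob_sum_right _ (fun ω => (X ω, Y ω)), Fintype.sum_prod_type]
  exact Finset.sum_congr rfl fun x' _ => Finset.sum_congr rfl fun y' _ =>
    prob_congr (by intro ω; simp [Prod.ext_iff]; tauto)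

lemma M11 (y : B) (w : D) : prob p (fun ω => (Y ω, W ω)) (y, w) = ∑ x', ∑ v', q! x' y v' w := by
  rw [prob_sum_right _ (fun ω => (X ω, V ω)), Fintype.sum_prod_type]
  exact Finset.sum_congr rfl fun x' _ => Finset.sum_congr rfl fun v' _ =>
    prob_congr (by intro ω; simp [Prod.ext_iff]; tauto)

lemma M12 (x : A) (y : B) (w : D) : prob p (fun ω => (X ω, Y ω, W ω)) (x, y, w) = ∑ v', q! x y v' w := by
  rw [prob_sum_right _ V]
  exact Finset.sum_congr rfl fun v' _ => prob_congr (by intro ω; simp [Prod.ext_iff]; tauto)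

lemma M13 (x : A) (w : D) : prob p (fun ω => (X ω, W ω)) (x, w) = ∑ y', ∑ v', q! x y' v' w := by
  rw [prob_sum_right _ (fun ω => (Y ω, V ω)), Fintype.sum_prod_type]
  exact Finset.sum_congr rfl fun y' _ => Finset.sum_congr rfl fun v' _ =>
    prob_congr (by intro ω; simp [Prod.ext_iff]; tauto)


lemma sum_perm4 {M : Type*} [AddCommMonoid M] (F : A → B → C → D → M) :
    ∑ v, ∑ y, ∑ w, ∑ x, F x y v w = ∑ x, ∑ y, ∑ v, ∑ w, F x y v w := by
  calc ∑ v, ∑ y, ∑ w, ∑ x, F x y v w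
      = ∑ y, ∑ v, ∑ w, ∑ x, F x y v w := Finset.sum_comm
    _ = ∑ y, ∑ v, ∑ x, ∑ w, F x y v w :=
        Finset.sum_congr rfl fun y _ => Finset.sum_congr rfl fun v _ => Finset.sum_comm
    _ = ∑ y, ∑ x, ∑ v, ∑ w, F x y v w := Finset.sum_congr rfl fun y _ => Finset.sum_comm
    _ = ∑ x, ∑ y, ∑ v, ∑ w, F x y v w := Finset.sum_comm

lemma convS1 : condMI p X Y (fun ω => (W ω, V ω)) =
    ∑ x, ∑ y, ∑ v, ∑ w, q! x y v w * Real.logb 2 (q! x y v w * (∑ x', ∑ y', q! x' y' v w) /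
      ((∑ y', q! x y' v w) * (∑ x', q! x' y v w))) := by
  unfold condMI
  refine Finset.sum_congr rfl fun x _ => Finset.sum_congr rfl fun y _ => ?_
  rw [Fintype.sum_prod_type]
  refine Eq.trans ?_ Finset.sum_comm
  refine Finset.sum_congr rfl fun w _ => Finset.sum_congr rfl fun v _ => ?_
  rw [M1a X Y V W, M2 X Y V W, M3 X Y V W, M4 X Y V W]

lemma convS2 : condMI p X Y W =
    ∑ x, ∑ y, ∑ v, ∑ w, q! x y v w * Real.logb 2 ((∑ v', q! x y v' w) * (∑ x', ∑ y', ∑ v', q! x' y' v' w) /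
      ((∑ y', ∑ v', q! x y' v' w) * (∑ x', ∑ v', q! x' y v' w))) := by
  unfold condMI
  refine Finset.sum_congr rfl fun x _ => Finset.sum_congr rfl fun y _ => ?_
  refine Eq.trans ?_ Finset.sum_comm
  refine Finset.sum_congr rfl fun w _ => ?_
  rw [M12 X Y V W, M9 X Y V W, M13 X Y V W, M11 X Y V W, Finset.sum_mul]

lemma convS3 : condMI p V Y (fun ω => (W ω, X ω)) =
    ∑ x, ∑ y, ∑ v, ∑ w, q! x y v w * Real.logb 2 (q! x y v w * (∑ y', ∑ v', q! x y' v' w) /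
      ((∑ y', q! x y' v w) * (∑ v', q! x y v' w))) := by
  unfold condMI
  refine Eq.trans ?_ (sum_perm4 _)
  refine Finset.sum_congr rfl fun v _ => Finset.sum_congr rfl fun y _ => ?_
  rw [Fintype.sum_prod_type]
  refine Finset.sum_congr rfl fun w _ => Finset.sum_congr rfl fun x _ => ?_
  rw [M1b X Y V W, M5 X Y V W, M6 X Y V W, M7 X Y V W]

lemma convS4 : condMI p V Y W =
    ∑ x, ∑ y, ∑ v, ∑ w, q! x y v w * Real.logb 2 ((∑ x', q! x' y v w) * (∑ x', ∑ y', ∑ v', q! x' y' v' w) /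
      ((∑ x', ∑ y', q! x' y' v w) * (∑ x', ∑ v', q! x' y v' w))) := by
  unfold condMI
  refine Eq.trans ?_ (sum_perm4 _)
  refine Finset.sum_congr rfl fun v _ => Finset.sum_congr rfl fun y _ => ?_
  refine Finset.sum_congr rfl fun w _ => ?_
  rw [M8 X Y V W, M9 X Y V W, M10 X Y V W, M11 X Y V W, Finset.sum_mul]


lemma pointwise (hp0 : ∀ ω, 0 ≤ p ω) (x : A) (y : B) (v : C) (w : D) :
    q! x y v w * Real.logb 2 (q! x y v w * (∑ x', ∑ y', q! x' y' v w) /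
        ((∑ y', q! x y' v w) * (∑ x', q! x' y v w)))
      + q! x y v w * Real.logb 2 ((∑ x', q! x' y v w) * (∑ x', ∑ y', ∑ v', q! x' y' v' w) /
        ((∑ x', ∑ y', q! x' y' v w) * (∑ x', ∑ v', q! x' y v' w)))
    = q! x y v w * Real.logb 2 ((∑ v', q! x y v' w) * (∑ x', ∑ y', ∑ v', q! x' y' v' w) /
        ((∑ y', ∑ v', q! x y' v' w) * (∑ x', ∑ v', q! x' y v' w)))
      + q! x y v w * Real.logb 2 (q! x y v w * (∑ y', ∑ v', q! x y' v' w) /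
        ((∑ y', q! x y' v w) * (∑ v', q! x y v' w))) := by
  have nn : ∀ a b c d, 0 ≤ q! a b c d := fun a b c d => prob_nonneg hp0 _ _
  rcases eq_or_lt_of_le (nn x y v w) with h | h
  · rw [← h]; ring
  · have h1 : 0 < ∑ y', q! x y' v w :=
      Finset.sum_pos' (fun i _ => nn _ _ _ _) ⟨y, Finset.mem_univ y, h⟩
    have h2 : 0 < ∑ x', q! x' y v w :=
      Finset.sum_pos' (fun i _ => nn _ _ _ _) ⟨x, Finset.mem_univ x, h⟩
    have h3 : 0 < ∑ v', q! x y v' w :=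
      Finset.sum_pos' (fun i _ => nn _ _ _ _) ⟨v, Finset.mem_univ v, h⟩
    have h4 : 0 < ∑ x', ∑ y', q! x' y' v w :=
      Finset.sum_pos' (fun i _ => Finset.sum_nonneg fun j _ => nn _ _ _ _)
        ⟨x, Finset.mem_univ x, h1⟩
    have h5 : 0 < ∑ y', ∑ v', q! x y' v' w :=
      Finset.sum_pos' (fun i _ => Finset.sum_nonneg fun j _ => nn _ _ _ _)
        ⟨y, Finset.mem_univ y, h3⟩
    have h6 : 0 < ∑ x', ∑ v', q! x' y v' w :=
      Finset.sum_pos' (fun i _ => Finset.sum_nonneg fun j _ => nn _ _ _ _)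
        ⟨x, Finset.mem_univ x, h3⟩
    have h7 : 0 < ∑ x', ∑ y', ∑ v', q! x' y' v' w :=
      Finset.sum_pos' (fun i _ => Finset.sum_nonneg fun j _ =>
        Finset.sum_nonneg fun k _ => nn _ _ _ _) ⟨x, Finset.mem_univ x, h5⟩
    rw [logb_split h h4 h1 h2, logb_split h2 h7 h4 h6, logb_split h3 h7 h5 h6,
      logb_split h h5 h1 h3]
    ring

lemma grand (hp0 : ∀ ω, 0 ≤ p ω) :
    condMI p X Y (fun ω => (W ω, V ω)) + condMI p V Y W =
      condMI p X Y W + condMI p V Y (fun ω => (W ω, X ω)) := by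
  rw [convS1 X Y V W, convS2 X Y V W, convS3 X Y V W, convS4 X Y V W,
    ← Finset.sum_add_distrib, ← Finset.sum_add_distrib]
  refine Finset.sum_congr rfl fun x _ => ?_
  rw [← Finset.sum_add_distrib, ← Finset.sum_add_distrib]
  refine Finset.sum_congr rfl fun y _ => ?_
  rw [← Finset.sum_add_distrib, ← Finset.sum_add_distrib]
  refine Finset.sum_congr rfl fun v _ => ?_
  rw [← Finset.sum_add_distrib, ← Finset.sum_add_distrib]
  refine Finset.sum_congr rfl fun w _ => ?_
  exact pointwise X Y V W hp0 x y v w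

end Four

section Triple
variable {Ω A B G : Type*} [Fintype Ω] [Fintype A] [Fintype B] [Fintype G]
  {p : Ω → ℝ} (X : Ω → A) (Y : Ω → B) (Z : Ω → G)

local notation "t!" => fun x y z => prob p (fun ω => (X ω, Y ω, Z ω)) (x, y, z)

lemma N1 (y : B) (z : G) : ∑ x, t! x y z = prob p (fun ω => (Y ω, Z ω)) (y, z) := by
  classical
  unfold prob
  rw [Finset.sum_comm]
  refine Finset.sum_congr rfl fun ω _ => ?_
  simp [Prod.ext_iff, ite_and]

lemma N2 (z : G) : ∑ x, prob p (fun ω => (X ω, Z ω)) (x, z) = prob p Z z := by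
  classical
  unfold prob
  rw [Finset.sum_comm]
  refine Finset.sum_congr rfl fun ω _ => ?_
  simp [Prod.ext_iff, ite_and]

lemma N3 (z : G) : ∑ y, prob p (fun ω => (Y ω, Z ω)) (y, z) = prob p Z z := by
  classical
  unfold prob
  rw [Finset.sum_comm]
  refine Finset.sum_congr rfl fun ω _ => ?_
  simp [Prod.ext_iff, ite_and]

lemma N4 (x : A) (y : B) : ∑ z, t! x y z = prob p (fun ω => (X ω, Y ω)) (x, y) := by
  classical
  unfold prob
  rw [Finset.sum_comm]
  refine Finset.sum_congr rfl fun ω _ => ?_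
  simp [Prod.ext_iff, ite_and]

lemma N5 (x : A) : ∑ y, prob p (fun ω => (X ω, Y ω)) (x, y) = prob p X x := by
  classical
  unfold prob
  rw [Finset.sum_comm]
  refine Finset.sum_congr rfl fun ω _ => ?_
  simp [Prod.ext_iff, ite_and]

lemma sum_perm3 {M : Type*} [AddCommMonoid M] (F : A → B → G → M) :
    ∑ x, ∑ y, ∑ z, F x y z = ∑ z, ∑ x, ∑ y, F x y z := by
  calc ∑ x, ∑ y, ∑ z, F x y z
      = ∑ x, ∑ z, ∑ y, F x y z := Finset.sum_congr rfl fun x _ => Finset.sum_comm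
    _ = ∑ z, ∑ x, ∑ y, F x y z := Finset.sum_comm

lemma condMI_nonneg (hp : IsPMF p) : 0 ≤ condMI p X Y Z := by
  classical
  have hpn := hp.1
  have hlog2 : 0 < Real.log 2 := Real.log_pos one_lt_two
  have key : ∀ x y z,
      (t! x y z - prob p (fun ω => (X ω, Z ω)) (x, z) * prob p (fun ω => (Y ω, Z ω)) (y, z)
          / prob p Z z) / Real.log 2
        ≤ t! x y z * Real.logb 2 (t! x y z * prob p Z z /
            (prob p (fun ω => (X ω, Z ω)) (x, z) * prob p (fun ω => (Y ω, Z ω)) (y, z))) := by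
    intro x y z
    have ha0 : 0 ≤ t! x y z := prob_nonneg hpn _ _
    have hb0 : 0 ≤ prob p Z z := prob_nonneg hpn _ _
    have hc0 : 0 ≤ prob p (fun ω => (X ω, Z ω)) (x, z) := prob_nonneg hpn _ _
    have hd0 : 0 ≤ prob p (fun ω => (Y ω, Z ω)) (y, z) := prob_nonneg hpn _ _
    rcases eq_or_lt_of_le ha0 with h | h
    · rw [← h, zero_mul, zero_sub, neg_div]
      simp only [neg_nonpos]
      positivity
    · have hc : 0 < prob p (fun ω => (X ω, Z ω)) (x, z) :=
        lt_of_lt_of_le h (prob_le hpn (by intro ω hw; simp [Prod.ext_iff] at hw ⊢; tauto))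
      have hd : 0 < prob p (fun ω => (Y ω, Z ω)) (y, z) :=
        lt_of_lt_of_le h (prob_le hpn (by intro ω hw; simp [Prod.ext_iff] at hw ⊢; tauto))
      have hb : 0 < prob p Z z :=
        lt_of_lt_of_le h (prob_le hpn (by intro ω hw; simp [Prod.ext_iff] at hw ⊢; tauto))
      set a := t! x y z
      set b := prob p Z z
      set c := prob p (fun ω => (X ω, Z ω)) (x, z)
      set d := prob p (fun ω => (Y ω, Z ω)) (y, z)
      have hr : 0 < a * b / (c * d) := by positivity
      have hlog : 1 - (a * b / (c * d))⁻¹ ≤ Real.log (a * b / (c * d)) := by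
        have h2 := Real.log_le_sub_one_of_pos (inv_pos.mpr hr)
        rw [Real.log_inv] at h2
        linarith
      have hmul : a * (1 - (a * b / (c * d))⁻¹) ≤ a * Real.log (a * b / (c * d)) :=
        mul_le_mul_of_nonneg_left hlog h.le
      have heq : a * (1 - (a * b / (c * d))⁻¹) = a - c * d / b := by
        field_simp
      rw [Real.logb, mul_div_assoc']
      have hfin : a - c * d / b ≤ a * Real.log (a * b / (c * d)) := by linarith
      first
      | exact div_le_div_of_nonneg_right hfin hlog2.le
      | exact div_le_div_of_nonneg_right hfin hlog2.le
      | gcongr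
  refine le_trans ?_ (Finset.sum_le_sum fun x _ => Finset.sum_le_sum fun y _ =>
    Finset.sum_le_sum fun z _ => key x y z)
  have e1 : ∑ x, ∑ y, ∑ z, t! x y z = 1 := by
    rw [Finset.sum_congr rfl fun x _ => Finset.sum_congr rfl fun y _ => N4 X Y Z x y]
    rw [Finset.sum_congr rfl fun x _ => N5 X Y x]
    exact sum_prob hp.2 X
  have e2 : ∑ z, ∑ x, ∑ y, prob p (fun ω => (X ω, Z ω)) (x, z) *
      prob p (fun ω => (Y ω, Z ω)) (y, z) / prob p Z z ≤ 1 := by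
    have step1 : ∀ z, ∑ x, ∑ y, prob p (fun ω => (X ω, Z ω)) (x, z) *
        prob p (fun ω => (Y ω, Z ω)) (y, z) / prob p Z z ≤ prob p Z z := by
      intro z
      have expand : ∑ x, ∑ y, prob p (fun ω => (X ω, Z ω)) (x, z) *
          prob p (fun ω => (Y ω, Z ω)) (y, z) / prob p Z z =
          (∑ x, prob p (fun ω => (X ω, Z ω)) (x, z)) *
          (∑ y, prob p (fun ω => (Y ω, Z ω)) (y, z)) / prob p Z z := by
        rw [Finset.sum_mul_sum, Finset.sum_div]
        exact Finset.sum_congr rfl fun x _ => (Finset.sum_div _ _ _).symm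
      rw [expand, N2 X Z z, N3 Y Z z]
      rcases eq_or_lt_of_le (prob_nonneg hpn Z z) with h | h
      · rw [← h]; simp
      · rw [mul_div_assoc, div_self h.ne', mul_one]
    calc ∑ z, ∑ x, ∑ y, prob p (fun ω => (X ω, Z ω)) (x, z) *
          prob p (fun ω => (Y ω, Z ω)) (y, z) / prob p Z z
        ≤ ∑ z, prob p Z z := Finset.sum_le_sum fun z _ => step1 z
      _ = 1 := sum_prob hp.2 Z
  have e3 : ∑ x, ∑ y, ∑ z, prob p (fun ω => (X ω, Z ω)) (x, z) *
      prob p (fun ω => (Y ω, Z ω)) (y, z) / prob p Z z ≤ 1 := by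
    rw [sum_perm3]
    exact e2
  have split : ∑ x, ∑ y, ∑ z, ((t! x y z - prob p (fun ω => (X ω, Z ω)) (x, z) *
      prob p (fun ω => (Y ω, Z ω)) (y, z) / prob p Z z) / Real.log 2) =
      ((∑ x, ∑ y, ∑ z, t! x y z) - ∑ x, ∑ y, ∑ z, prob p (fun ω => (X ω, Z ω)) (x, z) *
      prob p (fun ω => (Y ω, Z ω)) (y, z) / prob p Z z) / Real.log 2 := by
    simp only [sub_div, Finset.sum_sub_distrib, ← Finset.sum_div]
  rw [split, e1]
  exact div_nonneg (by linarith [e3]) hlog2.le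

end Triple


lemma step {Ω A B C D : Type*} [Fintype Ω] [Fintype A] [Fintype B] [Fintype C] [Fintype D]
    {p : Ω → ℝ} (hp : IsPMF p) (X : Ω → A) (Y : Ω → B) (V : Ω → C) (W : Ω → D)
    (h : condMI p V Y (fun ω => (W ω, X ω)) = 0) :
    condMI p X Y (fun ω => (W ω, V ω)) ≤ condMI p X Y W := by
  have hg := grand X Y V W hp.1
  have hnn := condMI_nonneg V Y W hp
  linarith

lemma condMI_comm {Ω A B G : Type*} [Fintype Ω] [Fintype A] [Fintype B] [Fintype G]
    {p : Ω → ℝ} (X : Ω → A) (Y : Ω → B) (Z : Ω → G) :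
    condMI p X Y Z = condMI p Y X Z := by
  unfold condMI
  rw [Finset.sum_comm]
  refine Finset.sum_congr rfl fun y _ => Finset.sum_congr rfl fun x _ =>
    Finset.sum_congr rfl fun z _ => ?_
  have h1 : prob p (fun ω => (X ω, Y ω, Z ω)) (x, y, z) =
      prob p (fun ω => (Y ω, X ω, Z ω)) (y, x, z) :=
    prob_congr (fun ω => by simp [Prod.ext_iff]; tauto)
  rw [h1, mul_comm (prob p (fun ω => (X ω, Z ω)) (x, z)) _]

lemma prob_eq_zero {Ω α : Type*} [Fintype Ω] {p : Ω → ℝ} {S : Ω → α} {s : α}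
    (h : ∀ ω, S ω ≠ s) : prob p S s = 0 := by
  classical
  unfold prob
  refine Finset.sum_eq_zero fun ω _ => ?_
  simp [h ω]

lemma condMI_recode {Ω A B G G' : Type*} [Fintype Ω] [Fintype A] [Fintype B] [Fintype G]
    [Fintype G'] {p : Ω → ℝ} (X : Ω → A) (Y : Ω → B) (Z : Ω → G) (e : G → G')
    (he : Function.Injective e) :
    condMI p X Y (fun ω => e (Z ω)) = condMI p X Y Z := by
  classical
  unfold condMI
  refine Finset.sum_congr rfl fun x _ => Finset.sum_congr rfl fun y _ => ?_
  rw [show (univ : Finset G') = univ from rfl]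
  calc ∑ z' : G', prob p (fun ω => (X ω, Y ω, e (Z ω))) (x, y, z') *
        Real.logb 2 (prob p (fun ω => (X ω, Y ω, e (Z ω))) (x, y, z') * prob p (fun ω => e (Z ω)) z' /
          (prob p (fun ω => (X ω, e (Z ω))) (x, z') * prob p (fun ω => (Y ω, e (Z ω))) (y, z')))
      = ∑ z' ∈ (univ : Finset G).image e, prob p (fun ω => (X ω, Y ω, e (Z ω))) (x, y, z') *
        Real.logb 2 (prob p (fun ω => (X ω, Y ω, e (Z ω))) (x, y, z') * prob p (fun ω => e (Z ω)) z' /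
          (prob p (fun ω => (X ω, e (Z ω))) (x, z') * prob p (fun ω => (Y ω, e (Z ω))) (y, z'))) := by
        refine (Finset.sum_subset (Finset.subset_univ _) ?_).symm
        intro z' _ hz'
        have h0 : prob p (fun ω => (X ω, Y ω, e (Z ω))) (x, y, z') = 0 := by
          refine prob_eq_zero fun ω hw => hz' ?_
          simp only [Prod.mk.injEq] at hw
          exact Finset.mem_image.mpr ⟨Z ω, Finset.mem_univ _, hw.2.2⟩
        rw [h0, zero_mul]
    _ = ∑ z : G, prob p (fun ω => (X ω, Y ω, e (Z ω))) (x, y, e z) *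
        Real.logb 2 (prob p (fun ω => (X ω, Y ω, e (Z ω))) (x, y, e z) * prob p (fun ω => e (Z ω)) (e z) /
          (prob p (fun ω => (X ω, e (Z ω))) (x, e z) * prob p (fun ω => (Y ω, e (Z ω))) (y, e z))) :=
        Finset.sum_image (fun a _ b _ hab => he hab)
    _ = ∑ z : G, prob p (fun ω => (X ω, Y ω, Z ω)) (x, y, z) *
        Real.logb 2 (prob p (fun ω => (X ω, Y ω, Z ω)) (x, y, z) * prob p Z z /
          (prob p (fun ω => (X ω, Z ω)) (x, z) * prob p (fun ω => (Y ω, Z ω)) (y, z))) := by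
        refine Finset.sum_congr rfl fun z _ => ?_
        have h1 : prob p (fun ω => (X ω, Y ω, e (Z ω))) (x, y, e z) =
            prob p (fun ω => (X ω, Y ω, Z ω)) (x, y, z) :=
          prob_congr (fun ω => by simp [Prod.ext_iff, he.eq_iff])
        have h2 : prob p (fun ω => e (Z ω)) (e z) = prob p Z z :=
          prob_congr (fun ω => by simp [he.eq_iff])
        have h3 : prob p (fun ω => (X ω, e (Z ω))) (x, e z) =
            prob p (fun ω => (X ω, Z ω)) (x, z) :=
          prob_congr (fun ω => by simp [Prod.ext_iff, he.eq_iff])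
        have h4 : prob p (fun ω => (Y ω, e (Z ω))) (y, e z) =
            prob p (fun ω => (Y ω, Z ω)) (y, z) :=
          prob_congr (fun ω => by simp [Prod.ext_iff, he.eq_iff])
        rw [h1, h2, h3, h4]

lemma condMI_unique {Ω A B G : Type*} [Fintype Ω] [Fintype A] [Fintype B] [Fintype G]
    [Unique G] {p : Ω → ℝ} (hp : IsPMF p) (X : Ω → A) (Y : Ω → B) (Z : Ω → G) :
    condMI p X Y Z = MI p X Y := by
  unfold condMI MI
  refine Finset.sum_congr rfl fun x _ => Finset.sum_congr rfl fun y _ => ?_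
  have hZ : ∀ ω, Z ω = default := fun ω => Subsingleton.elim _ _
  rw [Fintype.sum_unique]
  have h1 : prob p (fun ω => (X ω, Y ω, Z ω)) (x, y, default) =
      prob p (fun ω => (X ω, Y ω)) (x, y) :=
    prob_congr (fun ω => by simp [Prod.ext_iff, hZ ω])
  have h2 : prob p Z default = 1 := by
    unfold prob
    simp only [hZ, if_true]
    exact hp.2
  have h3 : prob p (fun ω => (X ω, Z ω)) (x, default) = prob p X x :=
    prob_congr (fun ω => by simp [Prod.ext_iff, hZ ω])
  have h4 : prob p (fun ω => (Y ω, Z ω)) (y, default) = prob p Y y :=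
    prob_congr (fun ω => by simp [Prod.ext_iff, hZ ω])
  rw [h1, h2, h3, h4, mul_one]

lemma snoc_pair_injective {n : ℕ} {𝒰 : Type*} :
    Function.Injective (fun sv : (Fin n → 𝒰) × 𝒰 => Fin.snoc sv.1 sv.2 : _ → Fin (n+1) → 𝒰) := by
  intro ⟨f, u⟩ ⟨g, v⟩ h
  simp only at h
  have h1 : f = g := by
    funext j
    have := congrFun h (Fin.castSucc j)
    simpa [Fin.snoc_castSucc] using this
  have h2 : u = v := by
    have := congrFun h (Fin.last n)
    simpa [Fin.snoc_last] using this
  simp [h1, h2]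


/-- For interactive protocols, I(X; Y | U_1,...,U_i) ≤ I(X; Y) for every i. -/
theorem stmt3 {Ω 𝒳 𝒴 𝒰 : Type*} [Fintype Ω] [Fintype 𝒳] [Fintype 𝒴] [Fintype 𝒰]
    (p : Ω → ℝ) (hp : IsPMF p) (r : ℕ)
    (X : Ω → 𝒳) (Y : Ω → 𝒴) (U : Fin r → Ω → 𝒰)
    (hodd : ∀ i : Fin r, Odd (i.1 + 1) →
      condMI p (U i) Y
        (fun ω => ((fun j : Fin i.1 => U ⟨j.1, by have h1 := j.2; have h2 := i.2; omega⟩ ω),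
          X ω)) = 0)
    (heven : ∀ i : Fin r, Even (i.1 + 1) →
      condMI p (U i) X
        (fun ω => ((fun j : Fin i.1 => U ⟨j.1, by have h1 := j.2; have h2 := i.2; omega⟩ ω),
          Y ω)) = 0) :
    ∀ i : Fin r,
      condMI p X Y
        (fun ω => fun j : Fin (i.1 + 1) =>
          U ⟨j.1, by have h1 := j.2; have h2 := i.2; omega⟩ ω) ≤ MI p X Y := by
  have claim : ∀ n, ∀ hn : n ≤ r,
      condMI p X Y (fun ω => fun j : Fin n => U ⟨j.1, by have := j.2; omega⟩ ω) ≤ MI p X Y := by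
    intro n
    induction n with
    | zero =>
      intro hn
      exact (condMI_unique hp X Y _).le
    | succ n ih =>
      intro hn
      have hn' : n ≤ r := by omega
      have hnr : n < r := by omega
      have hrec : condMI p X Y
          (fun ω => fun j : Fin (n+1) => U ⟨j.1, by have := j.2; omega⟩ ω)
          = condMI p X Y
            (fun ω => ((fun j : Fin n => U ⟨j.1, by have := j.2; omega⟩ ω), U ⟨n, hnr⟩ ω)) := by
        rw [← condMI_recode X Y
          (fun ω => ((fun j : Fin n => U ⟨j.1, by have := j.2; omega⟩ ω), U ⟨n, hnr⟩ ω))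
          _ snoc_pair_injective]
        congr 1
        funext ω
        funext j
        rcases lt_or_eq_of_le (Nat.lt_succ_iff.mp j.2) with hj | hj
        · have hcast : j = Fin.castSucc ⟨j.1, hj⟩ := by
            apply Fin.ext; simp
          conv_rhs => rw [hcast]
          rw [Fin.snoc_castSucc]
        · have hlast : j = Fin.last n := by
            apply Fin.ext; simp [hj]
          conv_rhs => rw [hlast]
          rw [Fin.snoc_last]
          exact congrFun (congrArg U (Fin.ext hj)) ω
      rw [hrec]
      rcases Nat.even_or_odd (n + 1) with he | ho
      · have h0 := heven ⟨n, hnr⟩ (by simpa using he)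
        have hstep := step hp Y X (U ⟨n, hnr⟩)
          (fun ω => fun j : Fin n => U ⟨j.1, by have := j.2; omega⟩ ω) h0
        calc condMI p X Y
              (fun ω => ((fun j : Fin n => U ⟨j.1, by have := j.2; omega⟩ ω), U ⟨n, hnr⟩ ω))
            = condMI p Y X
              (fun ω => ((fun j : Fin n => U ⟨j.1, by have := j.2; omega⟩ ω), U ⟨n, hnr⟩ ω)) :=
              condMI_comm _ _ _
          _ ≤ condMI p Y X (fun ω => fun j : Fin n => U ⟨j.1, by have := j.2; omega⟩ ω) := hstep
          _ = condMI p X Y (fun ω => fun j : Fin n => U ⟨j.1, by have := j.2; omega⟩ ω) :=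
              condMI_comm _ _ _
          _ ≤ MI p X Y := ih hn'
      · have h0 := hodd ⟨n, hnr⟩ (by simpa using ho)
        have hstep := step hp X Y (U ⟨n, hnr⟩)
          (fun ω => fun j : Fin n => U ⟨j.1, by have := j.2; omega⟩ ω) h0
        calc condMI p X Y
              (fun ω => ((fun j : Fin n => U ⟨j.1, by have := j.2; omega⟩ ω), U ⟨n, hnr⟩ ω))
            ≤ condMI p X Y (fun ω => fun j : Fin n => U ⟨j.1, by have := j.2; omega⟩ ω) := hstep
          _ ≤ MI p X Y := ih hn'
  intro i
  exact claim (i.1 + 1) (by have := i.2; omega)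
end

section
/- Let X, Y, U, Z be finite random variables with joint pmf p satisfying: (privacy against Alice) U - X - (Y, Z), and (privacy against Bob) U - (Y, Z) - X. Define x ~ x' if there exist y, z with p(x,y) > 0, p(x',y) > 0, p(z | x, y) > 0, and p(z | x', y) > 0. Then x ~ x' implies p(u | x) = p(u | x') for every u. -/
open Finset

lemma prob_congr_s9 {Ω α β : Type*} [Fintype Ω] (p : Ω → ℝ) (F : Ω → α) (G : Ω → β)
    (a : α) (b : β) (h : ∀ ω, F ω = a ↔ G ω = b) : prob p F a = prob p G b := by
  classical
  unfold prob
  exact Finset.sum_congr rfl fun ω _ => if_congr (h ω) rfl rfl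

lemma prob_mono {Ω α β : Type*} [Fintype Ω] (p : Ω → ℝ) (hpn : ∀ ω, 0 ≤ p ω)
    (F : Ω → α) (G : Ω → β) (a : α) (b : β) (h : ∀ ω, F ω = a → G ω = b) :
    prob p F a ≤ prob p G b := by
  classical
  unfold prob
  refine Finset.sum_le_sum fun ω _ => ?_
  by_cases hF : F ω = a
  · simp [hF, h ω hF]
  · simp only [if_neg hF]
    split
    · exact hpn ω
    · exact le_refl 0

/-- under privacy against Alice (U - X - (Y,Z)) and against Bob
(U - (Y,Z) - X), x ~ x' implies p(u|x) = p(u|x') for every u. -/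
theorem stmt9 {Ω 𝒳 𝒴 𝒰 𝒵 : Type*} [Fintype Ω]
    (p : Ω → ℝ) (hp : IsPMF p)
    (X : Ω → 𝒳) (Y : Ω → 𝒴) (U : Ω → 𝒰) (Z : Ω → 𝒵)
    (hA : MarkovChain p U X (fun ω => (Y ω, Z ω)))
    (hB : MarkovChain p U (fun ω => (Y ω, Z ω)) X)
    (x x' : 𝒳)
    (hsim : ∃ y z, 0 < prob p (fun ω => (X ω, Y ω)) (x, y) ∧
      0 < prob p (fun ω => (X ω, Y ω)) (x', y) ∧
      0 < prob p (fun ω => (Z ω, X ω, Y ω)) (z, x, y) ∧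
      0 < prob p (fun ω => (Z ω, X ω, Y ω)) (z, x', y)) :
    ∀ u, prob p (fun ω => (U ω, X ω)) (u, x) / prob p X x =
      prob p (fun ω => (U ω, X ω)) (u, x') / prob p X x' := by
  obtain ⟨hpn, -⟩ := hp
  obtain ⟨y, z, hxy, hx'y, hzxy, hzx'y⟩ := hsim
  intro u
  have key : ∀ x0 : 𝒳, 0 < prob p (fun ω => (Z ω, X ω, Y ω)) (z, x0, y) →
      prob p (fun ω => (U ω, X ω)) (u, x0) / prob p X x0 =
      prob p (fun ω => (U ω, (Y ω, Z ω))) (u, (y, z)) /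
        prob p (fun ω => (Y ω, Z ω)) (y, z) := by
    intro x0 hpos
    have ha : prob p (fun ω => (X ω, (Y ω, Z ω))) (x0, (y, z)) =
        prob p (fun ω => (Z ω, X ω, Y ω)) (z, x0, y) :=
      prob_congr_s9 _ _ _ _ _ (fun ω => by
        simp only [Prod.mk.injEq]; tauto)
    have ha0 : 0 < prob p (fun ω => (X ω, (Y ω, Z ω))) (x0, (y, z)) := ha ▸ hpos
    have hpx : 0 < prob p X x0 :=
      lt_of_lt_of_le ha0 (prob_mono p hpn _ _ _ _ (fun ω h => by
        simpa using congrArg Prod.fst h))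
    have hpyz : 0 < prob p (fun ω => (Y ω, Z ω)) (y, z) :=
      lt_of_lt_of_le ha0 (prob_mono p hpn _ _ _ _ (fun ω h => by
        simpa using congrArg Prod.snd h))
    have hA' := hA u x0 (y, z)
    have hB' := hB u (y, z) x0
    have e1 : prob p (fun ω => ((Y ω, Z ω), X ω)) ((y, z), x0) =
        prob p (fun ω => (X ω, (Y ω, Z ω))) (x0, (y, z)) :=
      prob_congr_s9 _ _ _ _ _ (fun ω => by simp only [Prod.mk.injEq]; tauto)
    have e2 : prob p (fun ω => (U ω, (Y ω, Z ω), X ω)) (u, (y, z), x0) =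
        prob p (fun ω => (U ω, X ω, (Y ω, Z ω))) (u, x0, (y, z)) :=
      prob_congr_s9 _ _ _ _ _ (fun ω => by simp only [Prod.mk.injEq]; tauto)
    have e3 : prob p (fun ω => (X ω, (Y ω, Z ω))) (x0, (y, z)) =
        prob p (fun ω => (X ω, Y ω, Z ω)) (x0, (y, z)) := rfl
    rw [e1] at hA'
    rw [e2, e3.symm] at hB'
    -- hA' : t * px = pux * a ; hB' : t * pyz = n * a
    field_simp
    -- goal : pux * pyz = n * px  (up to order)
    have := mul_right_cancel₀ (ne_of_gt ha0)
      (show prob p (fun ω => (U ω, X ω)) (u, x0) *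
          prob p (fun ω => (Y ω, Z ω)) (y, z) *
          prob p (fun ω => (X ω, (Y ω, Z ω))) (x0, (y, z)) =
        prob p (fun ω => (U ω, (Y ω, Z ω))) (u, (y, z)) * prob p X x0 *
          prob p (fun ω => (X ω, (Y ω, Z ω))) (x0, (y, z)) by
        calc prob p (fun ω => (U ω, X ω)) (u, x0) *
              prob p (fun ω => (Y ω, Z ω)) (y, z) *
              prob p (fun ω => (X ω, (Y ω, Z ω))) (x0, (y, z))
            = (prob p (fun ω => (U ω, X ω)) (u, x0) *
                prob p (fun ω => (X ω, (Y ω, Z ω))) (x0, (y, z))) *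
              prob p (fun ω => (Y ω, Z ω)) (y, z) := by ring
          _ = (prob p (fun ω => (U ω, X ω, Y ω, Z ω)) (u, x0, y, z) *
                prob p X x0) * prob p (fun ω => (Y ω, Z ω)) (y, z) := by rw [← hA']
          _ = (prob p (fun ω => (U ω, X ω, Y ω, Z ω)) (u, x0, y, z) *
                prob p (fun ω => (Y ω, Z ω)) (y, z)) * prob p X x0 := by ring
          _ = (prob p (fun ω => (U ω, (Y ω, Z ω))) (u, (y, z)) *
                prob p (fun ω => (X ω, (Y ω, Z ω))) (x0, (y, z))) * prob p X x0 := by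
                rw [hB']
          _ = prob p (fun ω => (U ω, (Y ω, Z ω))) (u, (y, z)) * prob p X x0 *
                prob p (fun ω => (X ω, (Y ω, Z ω))) (x0, (y, z)) := by ring)
    linarith [this]
  rw [key x hzxy, key x' hzx'y]
end
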